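/- (Weak duality.) Let σ be a Borel probability measure supported in Δ ⊂ [0,R₀]². For (P, Ψ) ∈ 𝒰₀ (convex conjugates of each other, so P(p) + Ψ(q) ≥ ⟨p,q⟩ on 𝒟 × ℝ₊²), and for any pair (ρ, γ) with ρ : [0,H] → [0, 1/(2r0²)) Borel, ∫_{D_ρ} e(s) ds dz = 1, and γ a transport plan between e(s)χ_{D_ρ} ℒ² and σ, one has J[σ](Ψ, P) ≤ I(ρ, γ), where I(ρ,γ) = ∫_{D_ρ × Δ} ( −⟨p,q⟩ + Υ/(2r0²) − Ω√Υ + r0²Ω²/(2(1−2r0² s)) ) γ(dp,dq) and J[σ](Ψ,P) = ∫ (Υ/(2r0²) − Ω√Υ − Ψ) dσ + inf_{ρ̃} ∫_0^H Π_P(ρ̃(z), z) dz. -/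

import Mathlib

open MeasureTheory

/-- `e(s) = r0^4/(1-2 s r0²)²`. -/
noncomputable def eFun (r0 s : ℝ) : ℝ := r0 ^ 4 / (1 - 2 * s * r0 ^ 2) ^ 2

/-- `Π_P(ρ,z)`. -/
noncomputable def PiFun (r0 Ω : ℝ) (P : ℝ × ℝ → ℝ) (ρ z : ℝ) : ℝ :=
  ∫ s in (0 : ℝ)..ρ, (Ω ^ 2 * r0 ^ 2 / (2 * (1 - 2 * s * r0 ^ 2)) - P (s, z)) * eFun r0 s

/-- The domain `𝒟 = [0, 1/(2r0²)) × [0,H]`. -/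
def Dom (r0 H : ℝ) : Set (ℝ × ℝ) := Set.Ico (0 : ℝ) (1 / (2 * r0 ^ 2)) ×ˢ Set.Icc (0 : ℝ) H

/-- `(P,Ψ) ∈ 𝒰₀`: conjugate pair with Fenchel–Young inequality. -/
def memU0 (r0 H : ℝ) (Δ : Set (ℝ × ℝ)) (P Ψ : ℝ × ℝ → ℝ) : Prop :=
  (∀ p ∈ Dom r0 H, P p = sSup ((fun q : ℝ × ℝ => p.1 * q.1 + p.2 * q.2 - Ψ q) '' Δ)) ∧
  (∀ q : ℝ × ℝ, 0 ≤ q.1 → 0 ≤ q.2 →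
    Ψ q = sSup ((fun p : ℝ × ℝ => p.1 * q.1 + p.2 * q.2 - P p) '' Dom r0 H)) ∧
  (∀ p ∈ Dom r0 H, ∀ q : ℝ × ℝ, 0 ≤ q.1 → 0 ≤ q.2 →
    p.1 * q.1 + p.2 * q.2 ≤ P p + Ψ q)

/-- `D_ρ = { (s,z) : 0 ≤ s ≤ ρ(z), z ∈ [0,H] }`. -/
def Dset (H : ℝ) (ρ : ℝ → ℝ) : Set (ℝ × ℝ) :=
  {p : ℝ × ℝ | p.2 ∈ Set.Icc (0 : ℝ) H ∧ p.1 ∈ Set.Icc (0 : ℝ) (ρ p.2)}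

/-- The measure `e(s) χ_{D_ρ} ℒ²`. -/
noncomputable def muD (r0 H : ℝ) (ρ : ℝ → ℝ) : Measure (ℝ × ℝ) :=
  MeasureTheory.volume.withDensity
    (fun p => ENNReal.ofReal ((Dset H ρ).indicator (fun p : ℝ × ℝ => eFun r0 p.1) p))

/-- The transport cost `−⟨p,q⟩ + Υ/(2r0²) − Ω√Υ + r0²Ω²/(2(1−2r0² s))`. -/
noncomputable def cost (r0 Ω : ℝ) (pq : (ℝ × ℝ) × (ℝ × ℝ)) : ℝ :=
  -(pq.1.1 * pq.2.1 + pq.1.2 * pq.2.2) + pq.2.1 / (2 * r0 ^ 2)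
    - Ω * Real.sqrt pq.2.1 + r0 ^ 2 * Ω ^ 2 / (2 * (1 - 2 * r0 ^ 2 * pq.1.1))

/-- `j(P) = inf_{ρt ∈ ℋ₀} ∫_0^H Π_P(ρt(z), z) dz`. -/
noncomputable def jP (r0 Ω H : ℝ) (P : ℝ × ℝ → ℝ) : ℝ :=
  sInf {x : ℝ | ∃ ρt : ℝ → ℝ, Measurable ρt ∧
    (∀ z, ρt z ∈ Set.Ico (0 : ℝ) (1 / (2 * r0 ^ 2))) ∧
    x = ∫ z in (0 : ℝ)..H, PiFun r0 Ω P (ρt z) z}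

/-- `J[σ](Ψ,P) = ∫ (Υ/(2r0²) − Ω√Υ − Ψ) dσ + j(P)`. -/
noncomputable def Jfun (r0 Ω H : ℝ) (σ : Measure (ℝ × ℝ)) (Ψ P : ℝ × ℝ → ℝ) : ℝ :=
  (∫ q : ℝ × ℝ, (q.1 / (2 * r0 ^ 2) - Ω * Real.sqrt q.1 - Ψ q) ∂σ) + jP r0 Ω H P

/-!
Fenchel–Young gives, for `p = (s, z) ∈ D_ρ` and `q = (Υ, Z) ∈ Δ`,
`(Ω²r0²/(2(1 - 2r0²s)) - P p) + (Υ/(2r0²) - Ω√Υ - Ψ q) ≤ cost (p, q)`.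
Integrating against the plan `γ` and reading off its marginals bounds
`∫_{D_ρ} (Ω²r0²/(2(1 - 2r0²s)) - P) e ds dz + ∫ (Υ/(2r0²) - Ω√Υ - Ψ) dσ` by `I(ρ, γ)`, and by
Fubini the first integral is `∫_0^H Π_P(ρ z, z) dz ≥ j(P)`.

Two points need care. `P` need not be measurable, so on `𝒟` it is replaced by the conjugate
formula `sup_{q ∈ Δ} (⟨p, q⟩ - Ψ q)`, which is Lipschitz because `Δ` is bounded. And `j(P)` is
an infimum of reals, so the admissible values must be bounded below: with `t = 1/(1 - 2r0²s)`
the integrand of `Π_P` is at least `r0⁴ (Ω²r0²/2 · t³ - C t²)` where `C` bounds `P` above, and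
this cubic in `t ≥ 0` is bounded below.
-/

open Set

section Transport

variable {X Y : Type*} [MeasurableSpace X] [MeasurableSpace Y]
  {μ : Measure X} {ν : Measure Y} {γ : Measure (X × Y)}

theorem integral_add_integral_le_of_map_fst_of_map_snd [IsFiniteMeasure ν]
    (hγ1 : γ.map Prod.fst = μ) (hγ2 : γ.map Prod.snd = ν)
    {g : X → ℝ} {f : Y → ℝ} {c : X × Y → ℝ} {C : ℝ}
    (hg : AEStronglyMeasurable g μ) (hgC : ∀ᵐ x ∂μ, C ≤ g x) (hf : Integrable f ν)
    (hc : Integrable c γ) (hgfc : ∀ᵐ xy ∂γ, g xy.1 + f xy.2 ≤ c xy) :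
    Integrable g μ ∧ ∫ x, g x ∂μ + ∫ y, f y ∂ν ≤ ∫ xy, c xy ∂γ := by
  subst hγ1 hγ2
  have : IsFiniteMeasure γ :=
    (Measure.isFiniteMeasure_map_iff measurable_snd.aemeasurable).1 ‹_›
  have hfγ : Integrable (fun xy : X × Y => f xy.2) γ := hf.comp_measurable measurable_snd
  have hgγ : Integrable (fun xy : X × Y => g xy.1) γ := by
    refine integrable_of_le_of_le (hg.comp_measurable measurable_fst)
      (ae_of_ae_map measurable_fst.aemeasurable hgC) ?_ (integrable_const C) (hc.sub hfγ)
    filter_upwards [hgfc] with xy hxy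
    simp only [Pi.sub_apply]
    linarith
  refine ⟨(integrable_map_measure hg measurable_fst.aemeasurable).2 hgγ, ?_⟩
  rw [integral_map measurable_fst.aemeasurable hg,
    integral_map measurable_snd.aemeasurable hf.aestronglyMeasurable, ← integral_add hgγ hfγ]
  exact integral_mono_ae (hgγ.add hfγ) hc hgfc

end Transport

noncomputable def legendreOn (Δ : Set (ℝ × ℝ)) (Ψ : ℝ × ℝ → ℝ) (p : ℝ × ℝ) : ℝ :=
  sSup ((fun q : ℝ × ℝ => p.1 * q.1 + p.2 * q.2 - Ψ q) '' Δ)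

section legendreOn

variable {Δ : Set (ℝ × ℝ)} {Ψ : ℝ × ℝ → ℝ} {K B : ℝ}

lemma mul_add_mul_le_of_abs_le (a b : ℝ) {x y : ℝ} (hx : |x| ≤ K) (hy : |y| ≤ K) :
    a * x + b * y ≤ (|a| + |b|) * K := by
  have hax : a * x ≤ |a| * K := (le_abs_self _).trans
    ((abs_mul a x).trans_le (mul_le_mul_of_nonneg_left hx (abs_nonneg a)))
  have hby : b * y ≤ |b| * K := (le_abs_self _).trans
    ((abs_mul b y).trans_le (mul_le_mul_of_nonneg_left hy (abs_nonneg b)))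
  linarith

lemma pairing_sub_le_of_mem (hΔ : ∀ q ∈ Δ, |q.1| ≤ K ∧ |q.2| ≤ K)
    (hΨ : ∀ q ∈ Δ, -B ≤ Ψ q) (p : ℝ × ℝ) {q : ℝ × ℝ} (hq : q ∈ Δ) :
    p.1 * q.1 + p.2 * q.2 - Ψ q ≤ (|p.1| + |p.2|) * K + B := by
  have := mul_add_mul_le_of_abs_le p.1 p.2 (hΔ q hq).1 (hΔ q hq).2
  linarith [hΨ q hq]

lemma bddAbove_legendreOn_image (hΔ : ∀ q ∈ Δ, |q.1| ≤ K ∧ |q.2| ≤ K)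
    (hΨ : ∀ q ∈ Δ, -B ≤ Ψ q) (p : ℝ × ℝ) :
    BddAbove ((fun q : ℝ × ℝ => p.1 * q.1 + p.2 * q.2 - Ψ q) '' Δ) :=
  ⟨_, forall_mem_image.2 fun _ hq => pairing_sub_le_of_mem hΔ hΨ p hq⟩

lemma legendreOn_le (hΔ : ∀ q ∈ Δ, |q.1| ≤ K ∧ |q.2| ≤ K) (hΨ : ∀ q ∈ Δ, -B ≤ Ψ q)
    {p : ℝ × ℝ} {a b : ℝ} (ha : |p.1| ≤ a) (hb : |p.2| ≤ b) :
    legendreOn Δ Ψ p ≤ max 0 ((a + b) * K + B) := by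
  refine Real.sSup_le (forall_mem_image.2 fun q hq => ?_) (le_max_left _ _)
  have hK : 0 ≤ K := (abs_nonneg _).trans (hΔ q hq).1
  have := pairing_sub_le_of_mem hΔ hΨ p hq
  have : (|p.1| + |p.2|) * K ≤ (a + b) * K := by gcongr
  exact le_max_of_le_right (by linarith)

lemma legendreOn_le_add_mul_dist (hΔ : ∀ q ∈ Δ, |q.1| ≤ K ∧ |q.2| ≤ K)
    (hΨ : ∀ q ∈ Δ, -B ≤ Ψ q) (hne : Δ.Nonempty) (p p' : ℝ × ℝ) :
    legendreOn Δ Ψ p ≤ legendreOn Δ Ψ p' + 2 * K * dist p p' := by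
  refine csSup_le (hne.image _) (forall_mem_image.2 fun q hq => ?_)
  have hp' : p'.1 * q.1 + p'.2 * q.2 - Ψ q ≤ legendreOn Δ Ψ p' :=
    le_csSup (bddAbove_legendreOn_image hΔ hΨ p') (mem_image_of_mem _ hq)
  have hK : 0 ≤ K := (abs_nonneg _).trans (hΔ q hq).1
  have hpp' := mul_add_mul_le_of_abs_le (p.1 - p'.1) (p.2 - p'.2) (hΔ q hq).1 (hΔ q hq).2
  have hdist : |p.1 - p'.1| + |p.2 - p'.2| ≤ 2 * dist p p' := by
    rw [Prod.dist_eq, ← Real.dist_eq, ← Real.dist_eq]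
    linarith [le_max_left (dist p.1 p'.1) (dist p.2 p'.2),
      le_max_right (dist p.1 p'.1) (dist p.2 p'.2)]
  nlinarith

lemma lipschitzWith_legendreOn (hΔ : ∀ q ∈ Δ, |q.1| ≤ K ∧ |q.2| ≤ K)
    (hΨ : ∀ q ∈ Δ, -B ≤ Ψ q) : LipschitzWith (2 * K).toNNReal (legendreOn Δ Ψ) := by
  rcases Δ.eq_empty_or_nonempty with rfl | hne
  · have : legendreOn ∅ Ψ = fun _ => 0 := funext fun _ => by simp [legendreOn]
    exact this ▸ LipschitzWith.const' 0
  exact LipschitzWith.of_le_add_mul' _ (legendreOn_le_add_mul_dist hΔ hΨ hne)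

end legendreOn

lemma neg_div_sq_le_mul_pow_three_sub {A C t : ℝ} (hA : 0 < A) (hC : 0 ≤ C) (ht : 0 ≤ t) :
    -(C ^ 3 / A ^ 2) ≤ A * t ^ 3 - C * t ^ 2 := by
  have hCA : C * (C / A) ^ 2 = C ^ 3 / A ^ 2 := by rw [div_pow]; ring
  rcases le_or_gt (C / A) t with h | h
  · have : C ≤ A * t := by rwa [div_le_iff₀' hA] at h
    have : 0 ≤ C ^ 3 / A ^ 2 := by positivity
    nlinarith [mul_le_mul_of_nonneg_left this (sq_nonneg t)]
  · have := mul_le_mul_of_nonneg_left (pow_le_pow_left₀ ht h.le 2) hC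
    nlinarith [pow_nonneg ht 3]

lemma sub_mul_le_intervalIntegral {f : ℝ → ℝ} {a b c : ℝ} (hab : a ≤ b) (hc : c ≤ 0)
    (h : ∀ x ∈ Icc a b, c ≤ f x) : (b - a) * c ≤ ∫ x in a..b, f x := by
  by_cases hf : IntervalIntegrable f volume a b
  · simpa using intervalIntegral.integral_mono_on hab intervalIntegrable_const hf h
  · rw [intervalIntegral.integral_undef hf]
    exact mul_nonpos_of_nonneg_of_nonpos (sub_nonneg.2 hab) hc

lemma eFun_nonneg (r0 s : ℝ) : 0 ≤ eFun r0 s := by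
  unfold eFun; positivity

section PiFun

variable {r0 Ω C : ℝ} {P : ℝ × ℝ → ℝ}

lemma neg_le_PiFun_integrand (hΩ : Ω ≠ 0) (hC : 0 ≤ C) {s x : ℝ}
    (hs : 2 * s * r0 ^ 2 < 1) (hx : x ≤ C) :
    -(4 * C ^ 3 / Ω ^ 4) ≤ (Ω ^ 2 * r0 ^ 2 / (2 * (1 - 2 * s * r0 ^ 2)) - x) * eFun r0 s := by
  rcases eq_or_ne r0 0 with rfl | hr0
  · simp only [eFun]; norm_num; positivity
  have hu : 0 < 1 - 2 * s * r0 ^ 2 := by linarith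
  set t := (1 - 2 * s * r0 ^ 2)⁻¹
  have ht : 0 ≤ t := by positivity
  have hcubic := neg_div_sq_le_mul_pow_three_sub (A := Ω ^ 2 * r0 ^ 2 / 2) (by positivity) hC ht
  have hexpand : (Ω ^ 2 * r0 ^ 2 / (2 * (1 - 2 * s * r0 ^ 2)) - x) * eFun r0 s
      = r0 ^ 4 * (Ω ^ 2 * r0 ^ 2 / 2 * t ^ 3 - x * t ^ 2) := by
    simp only [t, eFun]
    generalize 1 - 2 * s * r0 ^ 2 = u at hu ⊢
    field_simp
  have hconst : r0 ^ 4 * (C ^ 3 / (Ω ^ 2 * r0 ^ 2 / 2) ^ 2) = 4 * C ^ 3 / Ω ^ 4 := by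
    field_simp; ring
  rw [hexpand, ← hconst]
  nlinarith [mul_le_mul_of_nonneg_left (mul_le_mul_of_nonneg_right hx (sq_nonneg t))
    (pow_nonneg (sq_nonneg r0) 2), pow_two_nonneg (r0 ^ 2)]

lemma neg_le_PiFun (hr0 : r0 ≠ 0) (hΩ : Ω ≠ 0) (hC : 0 ≤ C) {r z : ℝ}
    (hr : r ∈ Ico 0 (1 / (2 * r0 ^ 2))) (hP : ∀ s ∈ Icc 0 r, P (s, z) ≤ C) :
    -(2 * C ^ 3 / (Ω ^ 4 * r0 ^ 2)) ≤ PiFun r0 Ω P r z := by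
  have hr0' : 0 < 2 * r0 ^ 2 := by positivity
  have hrr0 : 2 * r * r0 ^ 2 < 1 := by
    have := (lt_div_iff₀ hr0').1 hr.2
    linarith
  have hM : -(4 * C ^ 3 / Ω ^ 4) ≤ 0 := neg_nonpos.2 (by positivity)
  calc -(2 * C ^ 3 / (Ω ^ 4 * r0 ^ 2)) = (1 / (2 * r0 ^ 2) - 0) * -(4 * C ^ 3 / Ω ^ 4) := by
        field_simp; ring
    _ ≤ (r - 0) * -(4 * C ^ 3 / Ω ^ 4) := mul_le_mul_of_nonpos_right (by linarith [hr.2]) hM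
    _ ≤ PiFun r0 Ω P r z := sub_mul_le_intervalIntegral hr.1 hM fun s hs =>
        neg_le_PiFun_integrand hΩ hC (by nlinarith [hs.2, sq_nonneg r0]) (hP s hs)

lemma jP_le_integral_PiFun {H : ℝ} {ρ : ℝ → ℝ} (hr0 : r0 ≠ 0) (hΩ : Ω ≠ 0) (hH : 0 ≤ H)
    (hP : ∀ p ∈ Dom r0 H, P p ≤ C) (hρ : Measurable ρ)
    (hρH : ∀ z ∈ Icc 0 H, ρ z ∈ Ico 0 (1 / (2 * r0 ^ 2))) :
    jP r0 Ω H P ≤ ∫ z in (0 : ℝ)..H, PiFun r0 Ω P (ρ z) z := by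
  set M := 2 * max C 0 ^ 3 / (Ω ^ 4 * r0 ^ 2)
  have hM : 0 ≤ M := by positivity
  have hPi : ∀ z ∈ Icc 0 H, ∀ r ∈ Ico 0 (1 / (2 * r0 ^ 2)), -M ≤ PiFun r0 Ω P r z :=
    fun z hz r hr => neg_le_PiFun hr0 hΩ (le_max_right C 0) hr fun s hs =>
      (hP _ ⟨⟨hs.1, hs.2.trans_lt hr.2⟩, hz⟩).trans (le_max_left C 0)
  have hbdd : BddBelow {x : ℝ | ∃ ρt : ℝ → ℝ, Measurable ρt ∧
      (∀ z, ρt z ∈ Ico (0 : ℝ) (1 / (2 * r0 ^ 2))) ∧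
      x = ∫ z in (0 : ℝ)..H, PiFun r0 Ω P (ρt z) z} := by
    refine ⟨(H - 0) * -M, ?_⟩
    rintro _ ⟨ρt, -, hρt, rfl⟩
    exact sub_mul_le_intervalIntegral hH (neg_nonpos.2 hM) fun z hz => hPi z hz _ (hρt z)
  -- `jP` ranges over functions defined on all of `ℝ`, so extend `ρ` by `0` outside `[0, H]`
  refine csInf_le hbdd ⟨(Icc 0 H).indicator ρ, hρ.indicator measurableSet_Icc, fun z => ?_, ?_⟩
  · by_cases hz : z ∈ Icc 0 H
    · simpa [indicator_of_mem hz] using hρH z hz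
    · simp only [indicator_of_notMem hz]
      exact ⟨le_rfl, by positivity⟩
  · refine intervalIntegral.integral_congr fun z hz => ?_
    rw [uIcc_of_le hH] at hz
    simp only [indicator_of_mem hz]

lemma PiFun_congr {Φ : ℝ × ℝ → ℝ} {r z : ℝ} (hr : 0 ≤ r)
    (h : ∀ s ∈ Icc 0 r, P (s, z) = Φ (s, z)) : PiFun r0 Ω P r z = PiFun r0 Ω Φ r z :=
  intervalIntegral.integral_congr fun s hs => by
    rw [uIcc_of_le hr] at hs
    simp only [h s hs]

end PiFun

section muD

variable {r0 H : ℝ} {ρ : ℝ → ℝ}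

lemma measurableSet_Dset (hρ : Measurable ρ) : MeasurableSet (Dset H ρ) :=
  (measurable_snd measurableSet_Icc).inter
    ((measurableSet_le measurable_const measurable_fst).inter
      (measurableSet_le measurable_fst (hρ.comp measurable_snd)))

lemma measurable_muD_density (hρ : Measurable ρ) :
    Measurable fun p =>
      ENNReal.ofReal ((Dset H ρ).indicator (fun p : ℝ × ℝ => eFun r0 p.1) p) :=
  ((by unfold eFun; fun_prop : Measurable fun p : ℝ × ℝ => eFun r0 p.1).indicator
    (measurableSet_Dset hρ)).ennreal_ofReal

lemma ae_mem_Dset (hρ : Measurable ρ) : ∀ᵐ p ∂muD r0 H ρ, p ∈ Dset H ρ := by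
  rw [muD, ae_withDensity_iff (measurable_muD_density hρ)]
  refine ae_of_all _ fun p hp => ?_
  by_contra h
  simp [indicator_of_notMem h] at hp

lemma integral_muD (hρ : Measurable ρ) (hH : 0 ≤ H) (hρ0 : ∀ z ∈ Icc 0 H, 0 ≤ ρ z)
    {g : ℝ × ℝ → ℝ} (hg : Integrable g (muD r0 H ρ)) :
    ∫ p, g p ∂muD r0 H ρ = ∫ z in (0 : ℝ)..H, ∫ s in (0 : ℝ)..ρ z, eFun r0 s * g (s, z) := by
  have hmeas := measurable_muD_density (r0 := r0) (H := H) hρ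
  set d := (Dset H ρ).indicator (fun p : ℝ × ℝ => eFun r0 p.1)
  have hd : ∀ p, (ENNReal.ofReal (d p)).toReal • g p = d p * g p := fun p => by
    rw [ENNReal.toReal_ofReal (indicator_nonneg (fun p _ => eFun_nonneg r0 p.1) p), smul_eq_mul]
  have hfin : ∀ᵐ p ∂(volume : Measure (ℝ × ℝ)), ENNReal.ofReal (d p) < ⊤ :=
    ae_of_all _ fun _ => ENNReal.ofReal_lt_top
  have hint := (integrable_withDensity_iff_integrable_smul' hmeas hfin).1 hg
  simp only [hd] at hint
  rw [muD, integral_withDensity_eq_integral_toReal_smul hmeas hfin]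
  simp only [hd]
  rw [Measure.volume_eq_prod, integral_prod_symm _ hint, intervalIntegral.integral_of_le hH,
    ← integral_Icc_eq_integral_Ioc, ← integral_indicator measurableSet_Icc]
  congr 1 with z
  by_cases hz : z ∈ Icc 0 H
  · rw [indicator_of_mem hz, intervalIntegral.integral_of_le (hρ0 z hz),
      ← integral_Icc_eq_integral_Ioc, ← integral_indicator measurableSet_Icc]
    congr 1 with s
    by_cases hs : s ∈ Icc 0 (ρ z)
    · have hsz : (s, z) ∈ Dset H ρ := ⟨hz, hs⟩
      simp only [d, indicator_of_mem hsz, indicator_of_mem hs]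
    · have hsz : (s, z) ∉ Dset H ρ := fun h => hs h.2
      simp only [d, indicator_of_notMem hsz, indicator_of_notMem hs, zero_mul]
  · have hsz : ∀ s, (s, z) ∉ Dset H ρ := fun s h => hz h.1
    simp only [d, indicator_of_notMem hz, indicator_of_notMem (hsz _), zero_mul, integral_zero]

end muD

noncomputable def piIntegrand (r0 Ω : ℝ) (Φ : ℝ × ℝ → ℝ) (p : ℝ × ℝ) : ℝ :=
  Ω ^ 2 * r0 ^ 2 / (2 * (1 - 2 * p.1 * r0 ^ 2)) - Φ p

section piIntegrand

variable {r0 Ω : ℝ} {Φ : ℝ × ℝ → ℝ}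

lemma integral_piIntegrand_muD {H : ℝ} {ρ : ℝ → ℝ} (hρ : Measurable ρ) (hH : 0 ≤ H)
    (hρ0 : ∀ z ∈ Icc 0 H, 0 ≤ ρ z) (hΦ : Integrable (piIntegrand r0 Ω Φ) (muD r0 H ρ)) :
    ∫ p, piIntegrand r0 Ω Φ p ∂muD r0 H ρ = ∫ z in (0 : ℝ)..H, PiFun r0 Ω Φ (ρ z) z := by
  rw [integral_muD hρ hH hρ0 hΦ]
  simp only [PiFun, piIntegrand, mul_comm (eFun r0 _)]

lemma neg_le_piIntegrand {C : ℝ} {p : ℝ × ℝ} (hp : p.1 < 1 / (2 * r0 ^ 2)) (hΦ : Φ p ≤ C) :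
    -C ≤ piIntegrand r0 Ω Φ p := by
  have hu : 0 < 1 - 2 * p.1 * r0 ^ 2 := by
    rcases eq_or_ne r0 0 with rfl | hr0
    · norm_num
    have := (lt_div_iff₀ (by positivity : (0 : ℝ) < 2 * r0 ^ 2)).1 hp
    linarith
  have : 0 ≤ Ω ^ 2 * r0 ^ 2 / (2 * (1 - 2 * p.1 * r0 ^ 2)) := by positivity
  unfold piIntegrand
  linarith

lemma measurable_piIntegrand_legendreOn {Δ : Set (ℝ × ℝ)} {Ψ : ℝ × ℝ → ℝ} {K B : ℝ}
    (hΔ : ∀ q ∈ Δ, |q.1| ≤ K ∧ |q.2| ≤ K) (hΨ : ∀ q ∈ Δ, -B ≤ Ψ q) :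
    Measurable (piIntegrand r0 Ω (legendreOn Δ Ψ)) :=
  (measurable_const.div (by fun_prop)).sub
    (lipschitzWith_legendreOn hΔ hΨ).continuous.measurable

end piIntegrand

lemma abs_le_of_mem_Icc {R : ℝ} {q : ℝ × ℝ} (hq : q ∈ Icc (0, 0) (R, R)) :
    |q.1| ≤ R ∧ |q.2| ≤ R :=
  ⟨abs_le.2 ⟨by linarith [hq.1.1, hq.2.1], hq.2.1⟩,
    abs_le.2 ⟨by linarith [hq.1.2, hq.2.2], hq.2.2⟩⟩

section memU0

variable {r0 Ω H : ℝ} {Δ : Set (ℝ × ℝ)} {P Ψ : ℝ × ℝ → ℝ}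

lemma zero_mem_Dom (hr0 : r0 ≠ 0) (hH : 0 ≤ H) : ((0 : ℝ), (0 : ℝ)) ∈ Dom r0 H :=
  ⟨⟨le_rfl, by positivity⟩, le_rfl, hH⟩

lemma memU0.neg_le (hU : memU0 r0 H Δ P Ψ) (hr0 : r0 ≠ 0) (hH : 0 ≤ H) {q : ℝ × ℝ}
    (hq1 : 0 ≤ q.1) (hq2 : 0 ≤ q.2) : -P (0, 0) ≤ Ψ q := by
  have := hU.2.2 _ (zero_mem_Dom hr0 hH) q hq1 hq2
  simp only [zero_mul, add_zero] at this
  linarith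

lemma memU0.piIntegrand_add_le_cost (hU : memU0 r0 H Δ P Ψ) {p q : ℝ × ℝ}
    (hp : p ∈ Dom r0 H) (hq1 : 0 ≤ q.1) (hq2 : 0 ≤ q.2) :
    piIntegrand r0 Ω (legendreOn Δ Ψ) p + (q.1 / (2 * r0 ^ 2) - Ω * Real.sqrt q.1 - Ψ q)
      ≤ cost r0 Ω (p, q) := by
  have hFY := hU.2.2 p hp q hq1 hq2
  have hP : legendreOn Δ Ψ p = P p := (hU.1 p hp).symm
  have : r0 ^ 2 * Ω ^ 2 / (2 * (1 - 2 * r0 ^ 2 * p.1))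
      = Ω ^ 2 * r0 ^ 2 / (2 * (1 - 2 * p.1 * r0 ^ 2)) := by ring_nf
  simp only [piIntegrand, cost, hP]
  linarith

end memU0

theorem stmt15_general (r0 Ω H R0 : ℝ) (hr0 : 0 < r0) (hΩ : 0 < Ω) (hH : 0 < H)
    (Δ : Set (ℝ × ℝ)) (hΔ : Δ ⊆ Set.Icc (0, 0) (R0, R0))
    (σ : Measure (ℝ × ℝ)) [IsProbabilityMeasure σ] (hσΔ : σ Δᶜ = 0)
    (P Ψ : ℝ × ℝ → ℝ) (hU0 : memU0 r0 H Δ P Ψ)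
    (ρ : ℝ → ℝ) (hρmeas : Measurable ρ)
    (hρ : ∀ z ∈ Set.Icc (0 : ℝ) H, ρ z ∈ Set.Ico (0 : ℝ) (1 / (2 * r0 ^ 2)))
    (γ : Measure ((ℝ × ℝ) × (ℝ × ℝ)))
    (hγ1 : γ.map Prod.fst = muD r0 H ρ) (hγ2 : γ.map Prod.snd = σ)
    (hcost : Integrable (cost r0 Ω) γ)
    (hΨint : Integrable (fun q : ℝ × ℝ => q.1 / (2 * r0 ^ 2) - Ω * Real.sqrt q.1 - Ψ q) σ) :
    Jfun r0 Ω H σ Ψ P ≤ ∫ pq, cost r0 Ω pq ∂γ := by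
  have hΔR : ∀ q ∈ Δ, |q.1| ≤ R0 ∧ |q.2| ≤ R0 := fun q hq => abs_le_of_mem_Icc (hΔ hq)
  have hΨ : ∀ q ∈ Δ, -P (0, 0) ≤ Ψ q := fun q hq =>
    hU0.neg_le hr0.ne' hH.le (hΔ hq).1.1 (hΔ hq).1.2
  have hΦ : ∀ p ∈ Dom r0 H, legendreOn Δ Ψ p ≤ max 0 ((1 / (2 * r0 ^ 2) + H) * R0 + P (0, 0)) :=
    fun p hp => legendreOn_le hΔR hΨ ((abs_of_nonneg hp.1.1).trans_le hp.1.2.le)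
      ((abs_of_nonneg hp.2.1).trans_le hp.2.2)
  have hDom : ∀ p ∈ Dset H ρ, p ∈ Dom r0 H := fun p hp =>
    ⟨⟨hp.2.1, hp.2.2.trans_lt (hρ _ hp.1).2⟩, hp.1⟩
  have hFY : ∀ᵐ pq ∂γ, piIntegrand r0 Ω (legendreOn Δ Ψ) pq.1
      + (pq.2.1 / (2 * r0 ^ 2) - Ω * Real.sqrt pq.2.1 - Ψ pq.2) ≤ cost r0 Ω pq := by
    filter_upwards [ae_of_ae_map measurable_fst.aemeasurable (hγ1 ▸ ae_mem_Dset hρmeas),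
      ae_of_ae_map measurable_snd.aemeasurable (hγ2 ▸ mem_ae_iff.2 hσΔ)] with pq hp hq
    exact hU0.piIntegrand_add_le_cost (hDom _ hp) (hΔ hq).1.1 (hΔ hq).1.2
  obtain ⟨hint, hle⟩ := integral_add_integral_le_of_map_fst_of_map_snd hγ1 hγ2
    (measurable_piIntegrand_legendreOn hΔR hΨ).aestronglyMeasurable
    ((ae_mem_Dset hρmeas).mono fun p hp => neg_le_piIntegrand (hDom p hp).1.2 (hΦ p (hDom p hp)))
    hΨint hcost hFY
  have hj : jP r0 Ω H P ≤ ∫ p, piIntegrand r0 Ω (legendreOn Δ Ψ) p ∂muD r0 H ρ := calc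
    jP r0 Ω H P ≤ ∫ z in (0 : ℝ)..H, PiFun r0 Ω P (ρ z) z := jP_le_integral_PiFun hr0.ne'
      hΩ.ne' hH.le (fun p hp => (hU0.1 p hp).trans_le (hΦ p hp)) hρmeas hρ
    _ = ∫ z in (0 : ℝ)..H, PiFun r0 Ω (legendreOn Δ Ψ) (ρ z) z := by
      refine intervalIntegral.integral_congr fun z hz => ?_
      rw [uIcc_of_le hH.le] at hz
      exact PiFun_congr (hρ z hz).1 fun s hs => hU0.1 _ ⟨⟨hs.1, hs.2.trans_lt (hρ z hz).2⟩, hz⟩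
    _ = _ := (integral_piIntegrand_muD hρmeas hH.le (fun z hz => (hρ z hz).1) hint).symm
  rw [Jfun]
  linarith

/-- weak duality: for `(P,Ψ) ∈ 𝒰₀` and any admissible pair `(ρ, γ)` of a
free-boundary function and a transport plan between `e χ_{D_ρ} ℒ²` and `σ`,
`J[σ](Ψ,P) ≤ I(ρ,γ) = ∫ cost dγ`. -/
theorem stmt15 (r0 Ω H R0 : ℝ) (hr0 : 0 < r0) (hΩ : 0 < Ω) (hH : 0 < H) (hR0 : 1 < R0)
    (Δ : Set (ℝ × ℝ)) (hΔcl : IsClosed Δ) (hΔ : Δ ⊆ Set.Icc (0, 0) (R0, R0))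
    (σ : Measure (ℝ × ℝ)) [IsProbabilityMeasure σ] (hσΔ : σ Δᶜ = 0)
    (P Ψ : ℝ × ℝ → ℝ) (hU0 : memU0 r0 H Δ P Ψ)
    (ρ : ℝ → ℝ) (hρmeas : Measurable ρ)
    (hρ : ∀ z ∈ Set.Icc (0 : ℝ) H, ρ z ∈ Set.Ico (0 : ℝ) (1 / (2 * r0 ^ 2)))
    (hmass : muD r0 H ρ Set.univ = 1)
    (γ : Measure ((ℝ × ℝ) × (ℝ × ℝ)))
    (hγ1 : γ.map Prod.fst = muD r0 H ρ) (hγ2 : γ.map Prod.snd = σ)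
    (hcost : Integrable (cost r0 Ω) γ)
    (hΨint : Integrable (fun q : ℝ × ℝ => q.1 / (2 * r0 ^ 2) - Ω * Real.sqrt q.1 - Ψ q) σ) :
    Jfun r0 Ω H σ Ψ P ≤ ∫ pq, cost r0 Ω pq ∂γ :=
  stmt15_general r0 Ω H R0 hr0 hΩ hH Δ hΔ σ hσΔ P Ψ hU0 ρ hρmeas hρ γ hγ1 hγ2 hcost hΨint
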